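/- Let p > 3 be a prime, n ≥ 1, and let f(X) = X^{p^n−2} be the inverse function on F_{p^n}. Then the (classical) differential uniformity of f is Δ_f = 4 if χ(−3) = 1, and Δ_f = 2 (i.e., f is APN) if χ(−3) = −1. -/

import Mathlib

open Finset

/-- The `c`-DDT entry of `f` at `(a, b)`:
the number of `x` with `f (x + a) - c * f x = b`. -/
def cDDT {F : Type*} [Field F] [Fintype F] [DecidableEq F]
    (f : F → F) (c a b : F) : ℕ :=
  (Finset.univ.filter (fun x : F => f (x + a) - c * f x = b)).card

/-- The `c`-differential uniformity of `f`: the maximum of the `c`-DDT entries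
over all `a, b`, where `a ≠ 0` is required when `c = 1`. -/
def cDU {F : Type*} [Field F] [Fintype F] [DecidableEq F]
    (f : F → F) (c : F) : ℕ :=
  (Finset.univ.filter (fun ab : F × F => c = 1 → ab.1 ≠ 0)).sup
    (fun ab => cDDT f c ab.1 ab.2)

/-- The classical differential uniformity of `f`. -/
def DU {F : Type*} [Field F] [Fintype F] [DecidableEq F] (f : F → F) : ℕ :=
  cDU f 1

/-- The BCT entry of `f` at `(a, b)`: the number of pairs `(x, y)` with
`f x - f y = b` and `f (x + a) - f (y + a) = b`. -/
def BCT {F : Type*} [Field F] [Fintype F] [DecidableEq F]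
    (f : F → F) (a b : F) : ℕ :=
  (Finset.univ.filter (fun xy : F × F =>
    f xy.1 - f xy.2 = b ∧ f (xy.1 + a) - f (xy.2 + a) = b)).card

/-- The boomerang uniformity of `f`: the maximum of the BCT entries over all
nonzero `a, b`. -/
def BU {F : Type*} [Field F] [Fintype F] [DecidableEq F] (f : F → F) : ℕ :=
  (Finset.univ.filter (fun ab : F × F => ab.1 ≠ 0 ∧ ab.2 ≠ 0)).sup
    (fun ab => BCT f ab.1 ab.2)

/-- The quadratic character: `χ 0 = 0`, `χ α = 1` if `α` is a nonzero square,
and `χ α = -1` otherwise. -/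
noncomputable def chi {F : Type*} [Field F] (α : F) : ℤ :=
  letI := Classical.dec (α = 0)
  letI := Classical.dec (IsSquare α)
  if α = 0 then 0 else if IsSquare α then 1 else -1

/-- The `c`-differential spectrum entry `ω_i` of a power function:
the number of `b` with `cΔ_f(1, b) = i`. -/
def omegaSpec {F : Type*} [Field F] [Fintype F] [DecidableEq F]
    (f : F → F) (c : F) (i : ℕ) : ℕ :=
  (Finset.univ.filter (fun b : F => cDDT f c 1 b = i)).card

/-- The boomerang spectrum entry `v_i` of a power function:
the number of nonzero `b` with `B_f(1, b) = i`. -/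
def vSpec {F : Type*} [Field F] [Fintype F] [DecidableEq F]
    (f : F → F) (i : ℕ) : ℕ :=
  (Finset.univ.filter (fun b : F => b ≠ 0 ∧ BCT f 1 b = i)).card

/-!
For `a ≠ 0`, clearing denominators in `(x + a)⁻¹ - x⁻¹ = b` shows that its solutions are the
poles `x = 0` and `x = -a`, which solve it exactly when `b = a⁻¹`, together with the roots of
`b x² + a b x + a`. So every entry of the difference table of the inverse function is at most
`2 + 2`. When `b = a⁻¹` the quadratic has discriminant `-3`, so it contributes two more solutions
if `-3` is a nonzero square and none if it is a nonsquare; for `b ≠ a⁻¹` only the at most two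
roots of the quadratic remain.
-/

theorem chi_eq_one_iff {F : Type*} [Field F] {α : F} : chi α = 1 ↔ α ≠ 0 ∧ IsSquare α := by
  unfold chi
  split_ifs <;> simp_all

theorem chi_eq_neg_one_iff {F : Type*} [Field F] {α : F} : chi α = -1 ↔ ¬IsSquare α := by
  unfold chi
  split_ifs <;> simp_all

theorem FiniteField.pow_card_sub_two_eq_inv {K : Type*} [Field K] [Fintype K]
    (hK : 2 < Fintype.card K) (x : K) : x ^ (Fintype.card K - 2) = x⁻¹ := by
  rcases eq_or_ne x 0 with rfl | hx
  · simp [zero_pow (by omega : Fintype.card K - 2 ≠ 0)]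
  · refine eq_inv_of_mul_eq_one_left ?_
    rw [← pow_succ, show Fintype.card K - 2 + 1 = Fintype.card K - 1 by omega,
      FiniteField.pow_card_sub_one_eq_one x hx]

section Quadratic

variable {F : Type*} [Field F] [Fintype F] [DecidableEq F]

open Polynomial in
theorem card_filter_quadratic_eq_zero_le_two {a b c : F} (h : a ≠ 0 ∨ b ≠ 0 ∨ c ≠ 0) :
    #{x | a * (x * x) + b * x + c = 0} ≤ 2 := by
  set P : F[X] := C a * X ^ 2 + C b * X + C c
  have hP : P ≠ 0 := by
    intro hP
    have h2 := congrArg (coeff · 2) hP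
    have h1 := congrArg (coeff · 1) hP
    have h0 := congrArg (coeff · 0) hP
    simp [P, coeff_X, coeff_C] at h2 h1 h0
    tauto
  calc #{x | a * (x * x) + b * x + c = 0} ≤ P.natDegree := by
        refine card_le_degree_of_subset_roots fun x hx => ?_
        rw [mem_roots hP]
        simp_all [P, sq]
    _ ≤ 2 := natDegree_quadratic_le

theorem card_filter_quadratic_eq_zero_eq_two [NeZero (2 : F)] {a b c s : F} (ha : a ≠ 0)
    (hs : s ≠ 0) (h : discrim a b c = s * s) :
    #{x | a * (x * x) + b * x + c = 0} = 2 := by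
  have hroots : ({x | a * (x * x) + b * x + c = 0} : Finset F) =
      {(-b + s) / (2 * a), (-b - s) / (2 * a)} := by
    ext x
    simp [quadratic_eq_zero_iff ha h x]
  rw [hroots, card_pair]
  intro hEq
  field_simp at hEq
  have h2s : 2 * s = 0 := by linear_combination hEq
  exact hs ((mul_eq_zero.1 h2s).resolve_left two_ne_zero)

theorem card_filter_quadratic_eq_zero_eq_zero {a b c : F} (h : ¬IsSquare (discrim a b c)) :
    #{x | a * (x * x) + b * x + c = 0} = 0 := by
  rw [card_eq_zero, filter_eq_empty_iff]
  exact fun x _ => quadratic_ne_zero_of_discrim_ne_sq (fun s hs => h ⟨s, by rw [hs, sq]⟩) x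

end Quadratic

section InverseDifferences

variable {F : Type*} [Field F]

theorem inv_add_sub_inv_eq_iff {a b x : F} (ha : a ≠ 0) :
    (x + a)⁻¹ - x⁻¹ = b ↔ b = a⁻¹ ∧ (x = 0 ∨ x = -a) ∨ b * (x * x) + a * b * x + a = 0 := by
  rcases eq_or_ne x 0 with rfl | hx
  · simp [ha, eq_comm]
  rcases eq_or_ne (x + a) 0 with hxa | hxa
  · obtain rfl : x = -a := eq_neg_of_add_eq_zero_left hxa
    have : b * (-a * -a) + a * b * -a + a = a := by ring
    rw [this]
    simp [ha, eq_comm]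
  have hx' : x ≠ -a := fun h => hxa (by rw [h, neg_add_cancel])
  simp only [hx, hx', or_self, and_false, false_or]
  constructor
  · intro h
    field_simp at h
    linear_combination -h
  · intro h
    field_simp
    linear_combination -h

theorem discrim_inv_mul_inv {a : F} (ha : a ≠ 0) : discrim a⁻¹ (a * a⁻¹) a = -3 := by
  rw [discrim, mul_inv_cancel₀ ha, mul_assoc, inv_mul_cancel₀ ha]
  norm_num

variable [Fintype F] [DecidableEq F]

theorem cDDT_inv {a : F} (ha : a ≠ 0) (b : F) :
    cDDT (·⁻¹) 1 a b =
      (if b = a⁻¹ then 2 else 0) + #{x | b * (x * x) + a * b * x + a = 0} := by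
  have hpoles : #({x | b = a⁻¹ ∧ (x = 0 ∨ x = -a)} : Finset F) = if b = a⁻¹ then 2 else 0 := by
    split_ifs with hb
    · rw [show ({x | b = a⁻¹ ∧ (x = 0 ∨ x = -a)} : Finset F) = {0, -a} by ext; simp [hb]]
      exact card_pair (by simpa [eq_comm] using ha)
    · simp [hb]
  have hdisj : Disjoint ({x | b = a⁻¹ ∧ (x = 0 ∨ x = -a)} : Finset F)
      ({x | b * (x * x) + a * b * x + a = 0} : Finset F) := by
    rw [disjoint_filter]
    rintro x - ⟨-, rfl | rfl⟩
    · simpa using ha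
    · rwa [show b * (-a * -a) + a * b * -a + a = a by ring]
  rw [cDDT, ← hpoles, ← card_union_of_disjoint hdisj, ← filter_or]
  simp only [one_mul, inv_add_sub_inv_eq_iff ha]

theorem cDDT_inv_le_four {a : F} (ha : a ≠ 0) (b : F) : cDDT (·⁻¹) 1 a b ≤ 4 := by
  have := card_filter_quadratic_eq_zero_le_two (a := b) (b := a * b) (Or.inr (Or.inr ha))
  rw [cDDT_inv ha]
  split_ifs <;> omega

theorem cDDT_inv_le_two (h3 : ¬IsSquare (-3 : F)) {a : F} (ha : a ≠ 0) (b : F) :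
    cDDT (·⁻¹) 1 a b ≤ 2 := by
  rw [cDDT_inv ha]
  split_ifs with hb
  · subst hb
    rw [card_filter_quadratic_eq_zero_eq_zero (by rwa [discrim_inv_mul_inv ha])]
  · have := card_filter_quadratic_eq_zero_le_two (a := b) (b := a * b) (Or.inr (Or.inr ha))
    omega

theorem two_le_cDDT_inv_inv {a : F} (ha : a ≠ 0) : 2 ≤ cDDT (·⁻¹) 1 a a⁻¹ := by
  rw [cDDT_inv ha, if_pos rfl]
  omega

theorem cDDT_inv_inv_eq_four [NeZero (2 : F)] (h3 : (-3 : F) ≠ 0) (hsq : IsSquare (-3 : F))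
    {a : F} (ha : a ≠ 0) : cDDT (·⁻¹) 1 a a⁻¹ = 4 := by
  obtain ⟨s, hs⟩ := hsq
  have hs0 : s ≠ 0 := by rintro rfl; exact h3 (by rw [hs, mul_zero])
  rw [cDDT_inv ha, if_pos rfl, card_filter_quadratic_eq_zero_eq_two (inv_ne_zero ha) hs0
    (by rw [discrim_inv_mul_inv ha, hs])]

end InverseDifferences

theorem DU_eq_of_cDDT_le_of_le {F : Type*} [Field F] [Fintype F] [DecidableEq F] {f : F → F}
    {m : ℕ} (hle : ∀ a b, a ≠ 0 → cDDT f 1 a b ≤ m) {a b : F} (ha : a ≠ 0)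
    (hge : m ≤ cDDT f 1 a b) : DU f = m :=
  le_antisymm (Finset.sup_le fun ab hab => hle ab.1 ab.2 ((mem_filter.1 hab).2 rfl))
    (hge.trans (le_sup (f := fun ab : F × F => cDDT f 1 ab.1 ab.2) (b := (a, b))
      (mem_filter.2 ⟨mem_univ _, fun _ => ha⟩)))

theorem du_inverse_general (p n : ℕ) (hp : p.Prime) (hp3 : 3 < p)
    {F : Type*} [Field F] [Fintype F] [DecidableEq F]
    (hF : Fintype.card F = p ^ n) :
    (chi (-3 : F) = 1 → DU (fun x : F => x ^ (p ^ n - 2)) = 4) ∧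
    (chi (-3 : F) = -1 → DU (fun x : F => x ^ (p ^ n - 2)) = 2) := by
  have := Fact.mk hp
  have := charP_of_card_eq_prime_pow hF
  have : NeZero (2 : F) := ⟨Ring.two_ne_zero (by rw [ringChar.eq F p]; omega)⟩
  have hn : n ≠ 0 := by
    rintro rfl
    simpa [hF] using Fintype.one_lt_card (α := F)
  have hcard : 2 < Fintype.card F := hF ▸ (by omega : 2 < p).trans_le (Nat.le_self_pow hn p)
  have hinv : (fun x : F => x ^ (p ^ n - 2)) = (·⁻¹) :=
    funext (hF ▸ FiniteField.pow_card_sub_two_eq_inv hcard)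
  rw [hinv]
  refine ⟨fun h => ?_, fun h => ?_⟩
  · obtain ⟨h3, hsq⟩ := chi_eq_one_iff.1 h
    exact DU_eq_of_cDDT_le_of_le (fun a b ha => cDDT_inv_le_four ha b) one_ne_zero
      (cDDT_inv_inv_eq_four h3 hsq one_ne_zero).ge
  · exact DU_eq_of_cDDT_le_of_le (fun a b ha => cDDT_inv_le_two (chi_eq_neg_one_iff.1 h) ha b)
      one_ne_zero (two_le_cDDT_inv_inv one_ne_zero)

theorem du_inverse (p n : ℕ) (hp : p.Prime) (hp3 : 3 < p) (hn : 1 ≤ n)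
    {F : Type*} [Field F] [Fintype F] [DecidableEq F]
    (hF : Fintype.card F = p ^ n) :
    (chi (-3 : F) = 1 → DU (fun x : F => x ^ (p ^ n - 2)) = 4) ∧
    (chi (-3 : F) = -1 → DU (fun x : F => x ^ (p ^ n - 2)) = 2) :=
  du_inverse_general p n hp hp3 hF
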